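/- Let V : ℝ² → ℝ be bounded, nonnegative, supported in B_ρ(q'e₂) ∪ B_ρ(-q'e₂) for some ρ > 0 and q' > 2ρ. Define the operator K(ψ)(y) = (1/2π) ∫_{ℝ²₊} log(|z - ȳ|/|z - y|) V(z) ψ(z) dz for y in the upper half-plane ℝ²₊, where ȳ = (y₁, -y₂) is the reflection. Then for every bounded measurable ψ on ℝ²₊, the gradient bound ‖∇Kψ‖_{L^∞(ℝ²₊)} ≤ C ‖V‖_∞ ρ² ‖ψ‖_{L^∞(B_ρ(q'e₂))} holds for an absolute constant C (depending only on the geometry through ρ and q'). -/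

import Mathlib

/-!
On the upper half-plane `V` vanishes outside the disc `B = B_ρ(q'e₂)` (as `q' > ρ`), so after
identifying `ℝ × ℝ` with `ℂ`, `Kψ(w)` is `1/2π` times the potential
`∫_B log (|z - w̄| / |z - w|) V ψ`. Since `|log a - log b| ≤ |a - b| (1/a + 1/b)` and `|z - w|`,
`|z - w̄|` are 1-Lipschitz in `w`, moving `w` by `δ` changes the kernel by at most `δ` times a sum
of four inverse distances. In the plane the polar-coordinate density `t` cancels `1/t`, so
`∫_{B_r(c)} |z - p|⁻¹ ≤ 3πr` uniformly in `p`. Hence `Kψ` is Lipschitz with constant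
`6ρ ‖V‖_∞ ‖ψ‖_{L∞(B)}` for the Euclidean norm (twice that for the sup norm of `ℝ × ℝ`), and a
Lipschitz bound controls `fderiv` whether or not the function is differentiable.
-/

open Real MeasureTheory

/-- Euclidean norm on `ℝ × ℝ`. -/
noncomputable def nrm (v : ℝ × ℝ) : ℝ := Real.sqrt (v.1 ^ 2 + v.2 ^ 2)

open Metric Set

lemma abs_log_div_le {a b : ℝ} (ha : 0 < a) (hb : 0 < b) :
    |log (a / b)| ≤ |a - b| * (a⁻¹ + b⁻¹) := by
  have h₁ : log (a / b) ≤ (a - b) * b⁻¹ :=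
    calc log (a / b) ≤ a / b - 1 := log_le_sub_one_of_pos (div_pos ha hb)
      _ = (a - b) * b⁻¹ := by field_simp
  have h₂ : -log (a / b) ≤ (b - a) * a⁻¹ :=
    calc -log (a / b) = log (b / a) := by rw [← log_inv, inv_div]
      _ ≤ b / a - 1 := log_le_sub_one_of_pos (div_pos hb ha)
      _ = (b - a) * a⁻¹ := by field_simp
  have ha' := inv_pos.2 ha
  have hb' := inv_pos.2 hb
  rw [abs_le]
  constructor <;> nlinarith [le_abs_self (a - b), neg_abs_le (a - b), abs_nonneg (a - b)]

lemma abs_log_norm_sub_div_le {E : Type*} [NormedAddCommGroup E] {z p q : E} (hp : z ≠ p)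
    (hq : z ≠ q) :
    |log (‖z - p‖ / ‖z - q‖)| ≤ ‖p - q‖ * (‖z - p‖⁻¹ + ‖z - q‖⁻¹) := by
  refine (abs_log_div_le (norm_pos_iff.2 (sub_ne_zero.2 hp))
    (norm_pos_iff.2 (sub_ne_zero.2 hq))).trans ?_
  gcongr
  simpa [norm_sub_rev q p] using abs_norm_sub_norm_le (z - p) (z - q)

lemma ae_norm_log_norm_sub_div_mul_le {E : Type*} [NormedAddCommGroup E] [MeasurableSpace E]
    [OpensMeasurableSpace E] {μ : Measure E} [NullSingletonClass μ] {h : E → ℝ} {c : E}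
    {r M : ℝ} (hM : ∀ z ∈ ball c r, |h z| ≤ M) (p q : E) :
    ∀ᵐ z ∂μ.restrict (ball c r),
      ‖log (‖z - p‖ / ‖z - q‖) * h z‖ ≤ M * ‖p - q‖ * (‖z - p‖⁻¹ + ‖z - q‖⁻¹) := by
  filter_upwards [self_mem_ae_restrict measurableSet_ball,
    ae_restrict_of_ae (μ.ae_ne p), ae_restrict_of_ae (μ.ae_ne q)] with z hz hzp hzq
  rw [norm_mul, Real.norm_eq_abs, Real.norm_eq_abs,
    show M * ‖p - q‖ * (‖z - p‖⁻¹ + ‖z - q‖⁻¹) = ‖p - q‖ * (‖z - p‖⁻¹ + ‖z - q‖⁻¹) * M by ring]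
  exact mul_le_mul (abs_log_norm_sub_div_le hzp hzq) (hM z hz) (abs_nonneg _) (by positivity)

section Planar

variable {E : Type*} [NormedAddCommGroup E] [NormedSpace ℝ E] [FiniteDimensional ℝ E]
  [MeasurableSpace E] [BorelSpace E] (μ : Measure E) [μ.IsAddHaarMeasure]

lemma smul_indicator_inv_eq_indicator_one {R y : ℝ} (hy : y ∈ Ioi 0) :
    y ^ (2 - 1) • (Iio R).indicator (fun t : ℝ => t⁻¹) y = (Iio R).indicator 1 y := by
  by_cases hyR : y ∈ Iio R
  · simp [hyR, (mem_Ioi.mp hy).ne']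
  · simp [hyR]

lemma integrable_indicator_inv_norm_sub (hE : Module.finrank ℝ E = 2) (p : E) (R : ℝ) :
    Integrable (fun x => (Iio R).indicator (fun t : ℝ => t⁻¹) ‖x - p‖) μ := by
  have := Module.nontrivial_of_finrank_eq_succ hE
  have h0 : Integrable (fun x : E => (Iio R).indicator (fun t : ℝ => t⁻¹) ‖x‖) μ := by
    rw [integrable_fun_norm_addHaar μ, hE]
    refine IntegrableOn.congr_fun ?_ (fun y hy => (smul_indicator_inv_eq_indicator_one hy).symm)
      measurableSet_Ioi
    rw [integrableOn_indicator_iff measurableSet_Iio, Iio_inter_Ioi]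
    exact integrableOn_const (by simp)
  exact h0.comp_sub_right p

lemma integral_indicator_inv_norm_sub (hE : Module.finrank ℝ E = 2) (p : E) {R : ℝ}
    (hR : 0 ≤ R) :
    ∫ x, (Iio R).indicator (fun t : ℝ => t⁻¹) ‖x - p‖ ∂μ = 2 * μ.real (ball 0 1) * R := by
  have := Module.nontrivial_of_finrank_eq_succ hE
  rw [integral_sub_right_eq_self (fun x => (Iio R).indicator (fun t : ℝ => t⁻¹) ‖x‖) p,
    integral_fun_norm_addHaar μ, hE,
    setIntegral_congr_fun measurableSet_Ioi (fun y hy => smul_indicator_inv_eq_indicator_one hy),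
    setIntegral_indicator measurableSet_Iio, Ioi_inter_Iio]
  simp [Real.volume_real_Ioo_of_le hR]
  ring

lemma integrableOn_inv_norm_sub_ball (hE : Module.finrank ℝ E = 2) (p c : E) (r : ℝ) :
    IntegrableOn (fun x => ‖x - p‖⁻¹) (ball c r) μ := by
  refine (integrable_indicator_inv_norm_sub μ hE p (r + ‖c - p‖)).integrableOn.congr_fun
    (fun x hx => ?_) measurableSet_ball
  have : ‖x - p‖ < r + ‖c - p‖ :=
    (norm_sub_le_norm_sub_add_norm_sub x c p).trans_lt (by rw [mem_ball_iff_norm] at hx; linarith)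
  simp [this]

lemma setIntegral_ball_inv_norm_sub_le (hE : Module.finrank ℝ E = 2) (p c : E) {r : ℝ}
    (hr : 0 < r) :
    ∫ x in ball c r, ‖x - p‖⁻¹ ∂μ ≤ 3 * μ.real (ball 0 1) * r := by
  have := Module.nontrivial_of_finrank_eq_succ hE
  set F : E → ℝ := fun x => (Iio r).indicator (fun t : ℝ => t⁻¹) ‖x - p‖
  have hF := integrable_indicator_inv_norm_sub μ hE p r
  have hconst : IntegrableOn (fun _ => r⁻¹) (ball c r) μ :=
    integrableOn_const measure_ball_lt_top.ne
  have hpt : ∀ x ∈ ball c r, ‖x - p‖⁻¹ ≤ F x + r⁻¹ := by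
    intro x _
    by_cases h : ‖x - p‖ < r
    · simp [F, h, hr.le]
    · simpa [F, h] using inv_anti₀ hr (not_lt.mp h)
  calc ∫ x in ball c r, ‖x - p‖⁻¹ ∂μ ≤ ∫ x in ball c r, (F x + r⁻¹) ∂μ :=
        setIntegral_mono_on (integrableOn_inv_norm_sub_ball μ hE p c r)
          (hF.integrableOn.add hconst) measurableSet_ball hpt
    _ = ∫ x in ball c r, F x ∂μ + μ.real (ball c r) * r⁻¹ := by
        rw [integral_add hF.integrableOn hconst, setIntegral_const, smul_eq_mul]
    _ ≤ ∫ x, F x ∂μ + μ.real (ball c r) * r⁻¹ := by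
        refine add_le_add_left (setIntegral_le_integral hF (ae_of_all _ fun x => ?_)) _
        exact indicator_nonneg (fun t (_ : t ∈ Iio r) => inv_nonneg.2 (norm_nonneg _)) _
    _ = 3 * μ.real (ball 0 1) * r := by
        have hball : μ.real (ball c r) = r ^ 2 * μ.real (ball 0 1) := by
          simp only [measureReal_def, Measure.addHaar_ball μ c hr.le, hE, ENNReal.toReal_mul,
            ENNReal.toReal_ofReal (sq_nonneg r)]
        rw [integral_indicator_inv_norm_sub μ hE p hr.le, hball]
        field_simp
        ring

variable {μ} {h : E → ℝ} {c : E} {r M : ℝ}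

lemma integrableOn_mul_inv_norm_sub_add_inv_norm_sub (hE : Module.finrank ℝ E = 2) (p q : E) :
    IntegrableOn (fun z => M * ‖p - q‖ * (‖z - p‖⁻¹ + ‖z - q‖⁻¹)) (ball c r) μ :=
  ((integrableOn_inv_norm_sub_ball μ hE p c r).add
    (integrableOn_inv_norm_sub_ball μ hE q c r)).const_mul _

lemma integrableOn_log_norm_sub_div_mul (hE : Module.finrank ℝ E = 2)
    (hh : AEStronglyMeasurable h μ) (hM : ∀ z ∈ ball c r, |h z| ≤ M) (p q : E) :
    IntegrableOn (fun z => log (‖z - p‖ / ‖z - q‖) * h z) (ball c r) μ := by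
  have := Module.nontrivial_of_finrank_eq_succ hE
  have hlog : Measurable fun z => log (‖z - p‖ / ‖z - q‖) := by fun_prop
  exact (integrableOn_mul_inv_norm_sub_add_inv_norm_sub hE p q).mono'
    (hlog.aestronglyMeasurable.mul hh).restrict (ae_norm_log_norm_sub_div_mul_le hM p q)

lemma abs_setIntegral_log_norm_sub_div_mul_le (hE : Module.finrank ℝ E = 2) (hr : 0 < r)
    (hM : ∀ z ∈ ball c r, |h z| ≤ M) (p q : E) :
    |∫ z in ball c r, log (‖z - p‖ / ‖z - q‖) * h z ∂μ| ≤
      6 * μ.real (ball 0 1) * r * M * ‖p - q‖ := by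
  have := Module.nontrivial_of_finrank_eq_succ hE
  have hM₀ : 0 ≤ M := (abs_nonneg _).trans (hM c (mem_ball_self hr))
  calc |∫ z in ball c r, log (‖z - p‖ / ‖z - q‖) * h z ∂μ|
      ≤ ∫ z in ball c r, M * ‖p - q‖ * (‖z - p‖⁻¹ + ‖z - q‖⁻¹) ∂μ :=
        norm_integral_le_of_norm_le (integrableOn_mul_inv_norm_sub_add_inv_norm_sub hE p q)
          (ae_norm_log_norm_sub_div_mul_le hM p q)
    _ = M * ‖p - q‖ * (∫ z in ball c r, ‖z - p‖⁻¹ ∂μ + ∫ z in ball c r, ‖z - q‖⁻¹ ∂μ) := by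
        rw [integral_const_mul, integral_add (integrableOn_inv_norm_sub_ball μ hE p c r)
          (integrableOn_inv_norm_sub_ball μ hE q c r)]
    _ ≤ M * ‖p - q‖ * (3 * μ.real (ball 0 1) * r + 3 * μ.real (ball 0 1) * r) := by
        gcongr
        · exact setIntegral_ball_inv_norm_sub_le μ hE p c hr
        · exact setIntegral_ball_inv_norm_sub_le μ hE q c hr
    _ = 6 * μ.real (ball 0 1) * r * M * ‖p - q‖ := by ring

end Planar

open scoped ComplexConjugate

/-- `log (‖z - conj w‖ / ‖z - w‖)` is `2π` times the Dirichlet Green's function of the upper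
half-plane. -/
noncomputable def halfPlanePotential (c : ℂ) (r : ℝ) (h : ℂ → ℝ) (w : ℂ) : ℝ :=
  ∫ z in ball c r, log (‖z - conj w‖ / ‖z - w‖) * h z

lemma log_div_sub_log_div {a b c d : ℝ} (ha : a ≠ 0) (hb : b ≠ 0) (hc : c ≠ 0) (hd : d ≠ 0) :
    log (a / b) - log (c / d) = log (a / c) - log (b / d) := by
  rw [log_div ha hb, log_div hc hd, log_div ha hc, log_div hb hd]
  ring

lemma abs_halfPlanePotential_sub_le {c : ℂ} {r M : ℝ} {h : ℂ → ℝ} (hh : AEStronglyMeasurable h)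
    (hr : 0 < r) (hM : ∀ z ∈ ball c r, |h z| ≤ M) (w y : ℂ) :
    |halfPlanePotential c r h w - halfPlanePotential c r h y| ≤ 12 * π * r * M * ‖w - y‖ := by
  have hE : Module.finrank ℝ ℂ = 2 := Complex.finrank_real_complex
  have hint (p q : ℂ) := integrableOn_log_norm_sub_div_mul hE hh hM p q
  have hbound (p q : ℂ) := abs_setIntegral_log_norm_sub_div_mul_le (μ := volume) hE hr hM p q
  have hunit : volume.real (ball (0 : ℂ) 1) = π := by simp [measureReal_def]
  have hregroup : ∀ᵐ z ∂volume.restrict (ball c r),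
      log (‖z - conj w‖ / ‖z - w‖) * h z - log (‖z - conj y‖ / ‖z - y‖) * h z =
        log (‖z - conj w‖ / ‖z - conj y‖) * h z - log (‖z - w‖ / ‖z - y‖) * h z := by
    filter_upwards [ae_restrict_of_ae (volume.ae_ne w), ae_restrict_of_ae (volume.ae_ne (conj w)),
      ae_restrict_of_ae (volume.ae_ne y), ae_restrict_of_ae (volume.ae_ne (conj y))]
      with z hw hw' hy hy'
    simp only [← sub_mul]
    rw [log_div_sub_log_div] <;> simpa [sub_eq_zero]
  rw [halfPlanePotential, halfPlanePotential, ← integral_sub (hint _ _) (hint _ _),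
    integral_congr_ae hregroup, integral_sub (hint _ _) (hint _ _)]
  calc _ ≤ 6 * π * r * M * ‖conj w - conj y‖ + 6 * π * r * M * ‖w - y‖ := by
        refine (abs_sub _ _).trans (add_le_add ?_ ?_)
        · simpa [hunit] using hbound (conj w) (conj y)
        · simpa [hunit] using hbound w y
    _ = 12 * π * r * M * ‖w - y‖ := by
        rw [← map_sub, Complex.norm_conj]
        ring

lemma nrm_measurableEquivRealProd_sub (z : ℂ) (p : ℝ × ℝ) :
    nrm (Complex.measurableEquivRealProd z - p) =
      ‖z - Complex.measurableEquivRealProd.symm p‖ := by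
  simp [nrm, Complex.norm_eq_sqrt_sq_add_sq, Complex.measurableEquivRealProd_apply]

lemma abs_snd_le_nrm (v : ℝ × ℝ) : |v.2| ≤ nrm v := by
  rw [← Real.sqrt_sq_eq_abs]
  exact Real.sqrt_le_sqrt (by nlinarith [sq_nonneg v.1])

lemma norm_measurableEquivRealProd_symm_le (v : ℝ × ℝ) :
    ‖Complex.measurableEquivRealProd.symm v‖ ≤ 2 * ‖v‖ :=
  (Complex.norm_le_abs_re_add_abs_im _).trans
    (by simpa [two_mul] using add_le_add (norm_fst_le v) (norm_snd_le v))

lemma setIntegral_upperHalfPlane_eq_halfPlanePotential {f : ℝ × ℝ → ℝ} {q ρ : ℝ} (hρq : ρ ≤ q)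
    (hf : ∀ z : ℝ × ℝ, 0 < z.2 → f z ≠ 0 → nrm (z - (0, q)) < ρ) (w : ℝ × ℝ) :
    ∫ z in {z : ℝ × ℝ | 0 < z.2}, log (nrm (z - (w.1, -w.2)) / nrm (z - w)) * f z =
      halfPlanePotential ⟨0, q⟩ ρ (f ∘ Complex.measurableEquivRealProd)
        (Complex.measurableEquivRealProd.symm w) := by
  set e := Complex.measurableEquivRealProd
  have hsub : ball (⟨0, q⟩ : ℂ) ρ ⊆ e ⁻¹' {z | 0 < z.2} := by
    intro ζ hζ
    have := (Complex.abs_im_le_norm _).trans_lt (mem_ball_iff_norm.1 hζ)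
    simp only [Complex.sub_im, abs_lt] at this
    simp [e, Complex.measurableEquivRealProd_apply]
    linarith
  rw [← Complex.volume_preserving_equiv_real_prod.setIntegral_preimage_emb e.measurableEmbedding,
    halfPlanePotential, setIntegral_eq_of_subset_of_forall_sdiff_eq_zero
      (e.measurable (measurableSet_lt measurable_const measurable_snd)) hsub]
  · refine setIntegral_congr_fun measurableSet_ball fun ζ _ => ?_
    rw [nrm_measurableEquivRealProd_sub, nrm_measurableEquivRealProd_sub]
    rfl
  · rintro ζ ⟨hζU, hζ⟩
    by_contra hne
    have := hf (e ζ) hζU (right_ne_zero_of_mul hne)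
    rw [nrm_measurableEquivRealProd_sub] at this
    exact hζ (mem_ball_iff_norm.2 this)

lemma nrm_sub_lt_of_mem_support {V : ℝ × ℝ → ℝ} {q ρ : ℝ} (hρq : ρ ≤ q)
    (hsupp : Function.support V ⊆
      {z : ℝ × ℝ | nrm (z - (0, q)) < ρ} ∪ {z : ℝ × ℝ | nrm (z - (0, -q)) < ρ})
    {z : ℝ × ℝ} (hz : 0 < z.2) (hVz : V z ≠ 0) : nrm (z - (0, q)) < ρ := by
  refine (hsupp hVz).resolve_right fun hlow => ?_
  have := (abs_snd_le_nrm _).trans_lt hlow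
  simp only [Prod.snd_sub, abs_lt] at this
  linarith

/-- Gradient bound for the half-plane Green operator
`Kψ(y) = (1/2π)∫_{ℝ²₊} log(|z-ȳ|/|z-y|) V(z)ψ(z) dz`:
`‖∇Kψ‖_∞ ≤ C ‖V‖_∞ ρ² ‖ψ‖_{L∞(B_ρ(q'e₂))}`, with `C` depending only on `ρ` and `q'`. -/
theorem stmt10 (ρ q' : ℝ) (hρ : 0 < ρ) (hq' : 2 * ρ < q') :
    ∃ C > 0, ∀ V ψ : ℝ × ℝ → ℝ, ∀ CV Cψ B : ℝ,
      Measurable V → Measurable ψ →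
      (∀ z, 0 ≤ V z) → (∀ z, |V z| ≤ CV) →
      (Function.support V ⊆
        {z : ℝ × ℝ | nrm (z - (0, q')) < ρ} ∪ {z : ℝ × ℝ | nrm (z - (0, -q')) < ρ}) →
      (∀ z, |ψ z| ≤ B) →
      (∀ z : ℝ × ℝ, nrm (z - (0, q')) < ρ → |ψ z| ≤ Cψ) →
      ∀ y : ℝ × ℝ, 0 < y.2 →
        ‖fderiv ℝ (fun w : ℝ × ℝ =>
            (1 / (2 * π)) * ∫ z in {z : ℝ × ℝ | 0 < z.2},
              Real.log (nrm (z - (w.1, -w.2)) / nrm (z - w)) * (V z * ψ z)) y‖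
          ≤ C * CV * ρ ^ 2 * Cψ := by
  refine ⟨12 / ρ, by positivity, fun V ψ CV Cψ B hV hψ _ hVb hsupp _ hψb y _ => ?_⟩
  set e := Complex.measurableEquivRealProd
  set g : ℂ → ℝ := (fun z => V z * ψ z) ∘ e
  have hupper (z : ℝ × ℝ) (hz : 0 < z.2) (hne : V z * ψ z ≠ 0) : nrm (z - (0, q')) < ρ :=
    nrm_sub_lt_of_mem_support (by linarith) hsupp hz (left_ne_zero_of_mul hne)
  have hg : ∀ ζ ∈ ball (⟨0, q'⟩ : ℂ) ρ, |g ζ| ≤ CV * Cψ := by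
    intro ζ hζ
    rw [show g ζ = V (e ζ) * ψ (e ζ) from rfl, abs_mul]
    refine mul_le_mul (hVb _) (hψb _ ?_) (abs_nonneg _) ((abs_nonneg _).trans (hVb 0))
    rw [nrm_measurableEquivRealProd_sub]
    exact mem_ball_iff_norm.1 hζ
  have hM : 0 ≤ CV * Cψ := (abs_nonneg _).trans (hg _ (mem_ball_self hρ))
  have hC : 12 / ρ * CV * ρ ^ 2 * Cψ = 12 * ρ * (CV * Cψ) := by
    field_simp
  refine norm_fderiv_le_of_lip' ℝ (hC ▸ mul_nonneg (by positivity) hM)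
    (Filter.Eventually.of_forall fun w => ?_)
  simp only [setIntegral_upperHalfPlane_eq_halfPlanePotential (by linarith) hupper]
  rw [← mul_sub, norm_mul, Real.norm_eq_abs, Real.norm_eq_abs, abs_of_pos (by positivity)]
  calc 1 / (2 * π) * |halfPlanePotential ⟨0, q'⟩ ρ g (e.symm w) -
        halfPlanePotential ⟨0, q'⟩ ρ g (e.symm y)|
      ≤ 1 / (2 * π) * (12 * π * ρ * (CV * Cψ) * ‖e.symm (w - y)‖) := by
        gcongr
        exact abs_halfPlanePotential_sub_le
          ((hV.mul hψ).comp e.measurable).aestronglyMeasurable hρ hg _ _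
    _ ≤ 1 / (2 * π) * (12 * π * ρ * (CV * Cψ) * (2 * ‖w - y‖)) := by
        gcongr
        exact norm_measurableEquivRealProd_symm_le _
    _ = 12 / ρ * CV * ρ ^ 2 * Cψ * ‖w - y‖ := by
        rw [hC]
        field_simp
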